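/- arXiv:1703.04773 — 2 statements merged into one kernel-verified Lean document; each statement's English description precedes it below -/
import Mathlib

section
/- The map P defined on entire functions by P(f)(z) = f(0)·f'(z) is not hypercyclic on H(ℂ): there is no entire function f such that for every entire function g and every ε > 0, R > 0 there exists n ∈ ℕ with sup_{|z| ≤ R} |P^n(f)(z) − g(z)| < ε. -/
/-!
A dense orbit comes close to `0`, so some iterate `h = P^[n₀] f` has `‖h‖ ≤ 1/4` on the disc
of radius `2`. The Cauchy estimate for `h'` on slightly smaller discs then gives
`‖P^[m] h‖ ≤ 2⁻ᵐ / 4` on the disc of radius `1 + 2⁻ᵐ`: the factor `g(0)` in `P g` squares the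
bound, which beats the loss of `2ᵐ⁺¹` in the derivative. Hence `P^[n] f 0 → 0`, so the values
at `0` of the orbit are bounded and cannot approximate every constant function.
-/

open Filter Topology Metric

noncomputable def P (f : ℂ → ℂ) : ℂ → ℂ := fun z => f 0 * deriv f z

lemma differentiable_iterate_P {f : ℂ → ℂ} (hf : Differentiable ℂ f) (n : ℕ) :
    Differentiable ℂ (P^[n] f) := by
  induction n with
  | zero => exact hf
  | succ n ih =>
    rw [Function.iterate_succ_apply']
    exact (differentiable_const _).mul ih.deriv

lemma norm_P_le {h : ℂ → ℂ} (hh : Differentiable ℂ h) {r s A : ℝ} (hr : 0 ≤ r) (hs : 0 < s)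
    (hA : ∀ w, ‖w‖ ≤ r + s → ‖h w‖ ≤ A) {z : ℂ} (hz : ‖z‖ ≤ r) :
    ‖P h z‖ ≤ A * (A / s) := by
  have h0 : ‖h 0‖ ≤ A := hA 0 (by rw [norm_zero]; linarith)
  have hderiv : ‖deriv h z‖ ≤ A / s :=
    Complex.norm_deriv_le_of_forall_mem_sphere_norm_le hs hh.diffContOnCl fun w hw =>
      hA w ((norm_le_of_mem_closedBall (sphere_subset_closedBall hw)).trans (by linarith))
  rw [P, norm_mul]
  exact mul_le_mul h0 hderiv (norm_nonneg _) ((norm_nonneg _).trans h0)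

lemma norm_iterate_P_le {h : ℂ → ℂ} (hh : Differentiable ℂ h)
    (hb : ∀ z, ‖z‖ ≤ 2 → ‖h z‖ ≤ 1 / 4) (m : ℕ) {z : ℂ} (hz : ‖z‖ ≤ 1 + (1 / 2) ^ m) :
    ‖P^[m] h z‖ ≤ (1 / 2) ^ m / 4 := by
  induction m generalizing z with
  | zero => exact hb z (by norm_num at hz; linarith)
  | succ m ih =>
    rw [Function.iterate_succ_apply']
    refine (norm_P_le (differentiable_iterate_P hh m) (r := 1 + (1 / 2) ^ (m + 1))
      (s := (1 / 2) ^ (m + 1)) (by positivity) (by positivity) (fun w hw => ih ?_) hz).trans_eq ?_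
    · rw [pow_succ] at hw; linarith
    · rw [pow_succ]; field_simp; ring

lemma tendsto_iterate_P_apply_zero {h : ℂ → ℂ} (hh : Differentiable ℂ h)
    (hb : ∀ z, ‖z‖ ≤ 2 → ‖h z‖ ≤ 1 / 4) :
    Tendsto (fun m => P^[m] h 0) atTop (𝓝 0) := by
  refine squeeze_zero_norm (fun m => norm_iterate_P_le hh hb m (by rw [norm_zero]; positivity)) ?_
  simpa using (tendsto_pow_atTop_nhds_zero_of_lt_one (by norm_num : (0 : ℝ) ≤ 1 / 2)
    (by norm_num)).div_const 4

lemma not_denseRange_of_tendsto {E : Type*} [NormedAddCommGroup E] [NormedSpace ℝ E]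
    [Nontrivial E] {u : ℕ → E} {x : E} (hu : Tendsto u atTop (𝓝 x)) : ¬ DenseRange u :=
  fun hdense => NormedSpace.unbounded_univ ℝ E <| by
    simpa [hdense.closure_range] using (isBounded_range_of_tendsto u hu).closure

/-- `P(f) = f(0)·f'` is not hypercyclic on the space of entire functions. -/
theorem P_not_hypercyclic :
    ¬ ∃ f : ℂ → ℂ, Differentiable ℂ f ∧
      ∀ g : ℂ → ℂ, Differentiable ℂ g → ∀ ε > (0 : ℝ), ∀ R > (0 : ℝ),
        ∃ n : ℕ, ∀ z : ℂ, ‖z‖ ≤ R →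
          ‖(P^[n] f) z - g z‖ < ε := by
  rintro ⟨f, hf, hdense⟩
  obtain ⟨n₀, hn₀⟩ := hdense 0 (differentiable_const 0) (1 / 4) (by norm_num) 2 (by norm_num)
  have htendsto : Tendsto (fun n => P^[n] f 0) atTop (𝓝 0) := by
    refine (tendsto_add_atTop_iff_nat n₀).1 ?_
    simpa only [Function.iterate_add_apply] using
      tendsto_iterate_P_apply_zero (differentiable_iterate_P hf n₀)
        fun z hz => by simpa using (hn₀ z hz).le
  refine not_denseRange_of_tendsto htendsto (Metric.denseRange_iff.2 fun c δ hδ => ?_)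
  obtain ⟨n, hn⟩ := hdense (fun _ => c) (differentiable_const c) δ hδ 1 one_pos
  exact ⟨n, by simpa [dist_eq_norm, norm_sub_rev] using hn 0 (by simp)⟩
end

section
/- Let P be the map on entire functions defined by P(f)(z) = f(0)·f'(z) and let X = {f entire : there exists R > 1 with limsup_n |c_n(f)|·(n!)²·R^n = ∞}, where c_n(f) = ∏_{j=0}^{n-1} (f^{(j)}(0))^{2^{n-1-j}}. Then X is P-invariant: if f ∈ X then P(f) ∈ X. -/
/-!
From `c_{n+1}(f) = c_n(f)² · f^{(n)}(0)` and `(P f)^{(j)}(0) = f(0) · f^{(j+1)}(0)`, induction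
gives `f(0) · c_n(P f) = c_{n+1}(f)`. If `f ∈ X` then `f(0) ≠ 0`, and the sequence for `P f`
with radius `R²` is the sequence for `f` with radius `R`, shifted by one, times the factor
`R^{n+1} / ((n+1)² |f(0)| R²)`, which tends to infinity.
-/

open Filter

/-- `c_n(f) = ∏_{j=0}^{n-1} (f^{(j)}(0))^{2^{n-1-j}}`. -/
noncomputable def c (n : ℕ) (f : ℂ → ℂ) : ℂ :=
  ∏ j ∈ Finset.range n, (iteratedDeriv j f 0) ^ 2 ^ (n - 1 - j)

/-- Membership in `X`: there is `R > 1` with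
`limsup_n |c_n(f)|·(n!)²·Rⁿ = ∞`. -/
noncomputable def memX (f : ℂ → ℂ) : Prop :=
  ∃ R : ℝ, 1 < R ∧ ∀ M : ℝ, ∃ᶠ n in atTop,
    M ≤ ‖c n f‖ * (n.factorial : ℝ) ^ 2 * R ^ n

theorem frequently_le_mul_of_tendsto_atTop {α : Type*} {l : Filter α} {u v : α → ℝ}
    (hu : ∀ M, ∃ᶠ n in l, M ≤ u n) (hv : Tendsto v l atTop) (M : ℝ) :
    ∃ᶠ n in l, M ≤ u n * v n :=
  ((hu (max M 0)).and_eventually (hv.eventually_ge_atTop 1)).mono fun _ ⟨hun, hvn⟩ => by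
    nlinarith [le_max_left M 0, le_max_right M 0]

theorem tendsto_const_pow_div_pow_atTop {R : ℝ} (hR : 1 < R) (k : ℕ) :
    Tendsto (fun n : ℕ => R ^ n / (n : ℝ) ^ k) atTop atTop := by
  have hpos : ∀ᶠ n : ℕ in atTop, (n : ℝ) ^ k / R ^ n ∈ Set.Ioi 0 :=
    (eventually_ge_atTop 1).mono fun n hn => by
      have : (0 : ℝ) < n := by exact_mod_cast hn
      exact div_pos (pow_pos this k) (pow_pos (by linarith) n)
  exact (tendsto_nhdsWithin_iff.mpr ⟨tendsto_pow_const_div_const_pow_of_one_lt k hR, hpos⟩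
    ).inv_tendsto_nhdsGT_zero.congr fun n => by rw [Pi.inv_apply, inv_div]

theorem iteratedDeriv_P (f : ℂ → ℂ) (j : ℕ) (z : ℂ) :
    iteratedDeriv j (P f) z = f 0 * iteratedDeriv (j + 1) f z := by
  unfold P
  rw [iteratedDeriv_const_mul_field, iteratedDeriv_succ']

theorem c_zero (f : ℂ → ℂ) : c 0 f = 1 := by
  simp [c]

theorem c_succ (n : ℕ) (f : ℂ → ℂ) : c (n + 1) f = c n f ^ 2 * iteratedDeriv n f 0 := by
  rw [c, c, Finset.prod_range_succ, Nat.add_sub_cancel, Nat.sub_self, pow_zero, pow_one, ← Finset.prod_pow]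
  congr 1
  refine Finset.prod_congr rfl fun j hj => ?_
  have hj : j < n := Finset.mem_range.mp hj
  rw [← pow_mul, ← pow_succ]
  congr 2
  omega

theorem c_eq_zero_of_apply_zero {f : ℂ → ℂ} (h : f 0 = 0) {n : ℕ} (hn : n ≠ 0) : c n f = 0 :=
  Finset.prod_eq_zero (Finset.mem_range.mpr (Nat.pos_of_ne_zero hn))
    (by simp [h])

theorem apply_zero_mul_c_P (f : ℂ → ℂ) (n : ℕ) : f 0 * c n (P f) = c (n + 1) f := by
  induction n with
  | zero => simp [c_zero, c_succ]
  | succ n ih =>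
    rw [c_succ, c_succ (n + 1), ← ih, iteratedDeriv_P]
    ring

theorem apply_zero_ne_zero_of_memX {f : ℂ → ℂ} (hfX : memX f) : f 0 ≠ 0 := by
  intro h
  obtain ⟨R, -, hfreq⟩ := hfX
  obtain ⟨n, hn, hn1⟩ := ((hfreq 1).and_eventually (eventually_ge_atTop 1)).exists
  rw [c_eq_zero_of_apply_zero h (by omega)] at hn
  norm_num at hn

theorem X_invariant_general (f : ℂ → ℂ) (hfX : memX f) :
    memX (P f) := by
  have hf0 : 0 < ‖f 0‖ := norm_pos_iff.mpr (apply_zero_ne_zero_of_memX hfX)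
  obtain ⟨R, hR, hfreq⟩ := hfX
  have hR0 : 0 < R := by linarith
  refine ⟨R ^ 2, one_lt_pow₀ hR two_ne_zero, fun M => ?_⟩
  have hshift : ∀ M : ℝ, ∃ᶠ n in atTop,
      M ≤ ‖c (n + 1) f‖ * ((n + 1).factorial : ℝ) ^ 2 * R ^ (n + 1) := fun M => by
    have := hfreq M
    rwa [← map_add_atTop_eq_nat 1, frequently_map] at this
  have hfactor : Tendsto (fun n : ℕ => R ^ (n + 1) / ((n + 1 : ℕ) : ℝ) ^ 2 / (‖f 0‖ * R ^ 2))
      atTop atTop :=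
    ((tendsto_const_pow_div_pow_atTop hR 2).comp (tendsto_add_atTop_nat 1)).atTop_div_const
      (by positivity)
  refine (frequently_le_mul_of_tendsto_atTop hshift hfactor M).mono fun n hn => hn.trans_eq ?_
  rw [← apply_zero_mul_c_P, norm_mul, Nat.factorial_succ]
  push_cast
  field_simp
  ring

/-- `X` is invariant under `P`. -/
theorem X_invariant (f : ℂ → ℂ) (hf : Differentiable ℂ f) (hfX : memX f) :
    memX (P f) :=
  X_invariant_general f hfX
end
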